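/- Let μ > 0 and let S, Z : [0,∞) → ℝ be twice continuously differentiable functions solving the reduced soliton-star system S''(ξ) + (2/ξ)S'(ξ) − S(ξ) = S(ξ)Z(ξ) and Z''(ξ) + (2/ξ)Z'(ξ) = μ S(ξ)² for ξ > 0, with S not identically zero. Assume there exist constants C, a > 0 such that |S(ξ)| + |S'(ξ)| ≤ C e^{−aξ} for all ξ ≥ 0, and that ξZ(ξ) and ξ²Z'(ξ) are bounded on (0,∞) with Z(ξ) → 0 as ξ → ∞. Then ∫₀^∞ ξ² S(ξ)² Z(ξ) dξ < 0. -/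

import Mathlib

/-!
Multiplying the `S`-equation by `ξ² S` and using `(ξ² S')' = ξ² (S'' + (2/ξ) S')` gives
`(ξ² S' S)' = ξ² (S'² + S²) + ξ² S² Z` on `(0, ∞)`. The flux `ξ² S' S` vanishes at `0` and at `∞`
by the exponential decay of `S` and `S'`, and both terms on the right are integrable (the second
because `ξ Z` is bounded), so `∫ ξ² S² Z = -∫ ξ² (S'² + S²)`, and the right side is negative as
soon as `S` does not vanish identically.
-/

open MeasureTheory Filter Set Real Topology

theorem hasDerivAt_sq_mul_deriv_mul {f : ℝ → ℝ} {ξ : ℝ} (hξ : ξ ≠ 0)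
    (hf : DifferentiableAt ℝ f ξ) (hf' : DifferentiableAt ℝ (deriv f) ξ) :
    HasDerivAt (fun t => t ^ 2 * deriv f t * f t)
      (ξ ^ 2 * deriv f ξ ^ 2 + ξ ^ 2 * (deriv (deriv f) ξ + 2 / ξ * deriv f ξ) * f ξ) ξ := by
  refine (((hasDerivAt_pow 2 ξ).mul hf'.hasDerivAt).mul hf.hasDerivAt).congr_deriv ?_
  simp only [Pi.mul_apply]
  field_simp
  ring

theorem integrableOn_Ioi_pow_mul_exp_neg_mul (n : ℕ) {b : ℝ} (hb : 0 < b) :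
    IntegrableOn (fun x : ℝ => x ^ n * exp (-b * x)) (Ioi 0) := by
  simpa using integrableOn_rpow_mul_exp_neg_mul_rpow (s := n) (p := 1)
    (by linarith [n.cast_nonneg (α := ℝ)]) one_pos hb

theorem setIntegral_pos_of_continuousOn_of_nonneg {X : Type*} [TopologicalSpace X]
    [MeasurableSpace X] [OpensMeasurableSpace X] {μ : Measure X} [μ.IsOpenPosMeasure]
    {U : Set X} {f : X → ℝ} {x₀ : X} (hU : IsOpen U) (hfc : ContinuousOn f U)
    (hfi : IntegrableOn f U μ) (hf : ∀ x ∈ U, 0 ≤ f x) (hx₀ : x₀ ∈ U) (hfx₀ : 0 < f x₀) :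
    0 < ∫ x in U, f x ∂μ := by
  rw [setIntegral_pos_iff_support_of_nonneg_ae (ae_restrict_of_forall_mem hU.measurableSet hf) hfi]
  calc 0 < μ (U ∩ f ⁻¹' Ioi 0) :=
        (hfc.isOpen_inter_preimage hU isOpen_Ioi).measure_pos μ ⟨x₀, hx₀, hfx₀⟩
    _ ≤ μ (Function.support f ∩ U) := measure_mono fun x hx => ⟨hx.2.ne', hx.1⟩

theorem sq_add_sq_le_sq_of_abs_add_abs_le {u v K : ℝ} (h : |u| + |v| ≤ K) :
    u ^ 2 + v ^ 2 ≤ K ^ 2 := by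
  nlinarith [sq_abs u, sq_abs v, abs_nonneg u, abs_nonneg v]

theorem abs_mul_abs_le_sq_of_abs_add_abs_le {u v K : ℝ} (h : |u| + |v| ≤ K) :
    |u| * |v| ≤ K ^ 2 := by
  nlinarith [abs_nonneg u, abs_nonneg v]

theorem mul_exp_neg_mul_sq (C a ξ : ℝ) :
    (C * exp (-a * ξ)) ^ 2 = C ^ 2 * exp (-(2 * a) * ξ) := by
  rw [mul_pow, ← exp_nat_mul]
  ring_nf

section DecayingProfile

variable {S Z : ℝ → ℝ} {C a B : ℝ}

theorem integrableOn_energy_density (hS : ContinuousOn S (Ioi 0))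
    (hS' : ContinuousOn (deriv S) (Ioi 0)) (ha : 0 < a)
    (hdec : ∀ ξ ≥ (0:ℝ), |S ξ| + |deriv S ξ| ≤ C * exp (-a * ξ)) :
    IntegrableOn (fun ξ => ξ ^ 2 * (deriv S ξ ^ 2 + S ξ ^ 2)) (Ioi 0) := by
  refine ((integrableOn_Ioi_pow_mul_exp_neg_mul 2 (by positivity : 0 < 2 * a)).const_mul
    (C ^ 2)).mono' ((by fun_prop : ContinuousOn _ _).aestronglyMeasurable measurableSet_Ioi)
    (ae_restrict_of_forall_mem measurableSet_Ioi fun ξ (hξ : 0 < ξ) => ?_)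
  have hK := (sq_add_sq_le_sq_of_abs_add_abs_le (hdec ξ hξ.le)).trans_eq
    (mul_exp_neg_mul_sq C a ξ)
  rw [Real.norm_of_nonneg (by positivity)]
  nlinarith [mul_le_mul_of_nonneg_left hK (sq_nonneg ξ)]

theorem integrableOn_interaction_density (hS : ContinuousOn S (Ioi 0))
    (hZ : ContinuousOn Z (Ioi 0)) (ha : 0 < a)
    (hdec : ∀ ξ ≥ (0:ℝ), |S ξ| + |deriv S ξ| ≤ C * exp (-a * ξ))
    (hZB : ∀ ξ ∈ Ioi (0:ℝ), |ξ * Z ξ| ≤ B) :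
    IntegrableOn (fun ξ => ξ ^ 2 * S ξ ^ 2 * Z ξ) (Ioi 0) := by
  refine ((integrableOn_Ioi_pow_mul_exp_neg_mul 1 (by positivity : 0 < 2 * a)).const_mul
    (B * C ^ 2)).mono' ((by fun_prop : ContinuousOn _ _).aestronglyMeasurable measurableSet_Ioi)
    (ae_restrict_of_forall_mem measurableSet_Ioi fun ξ (hξ : 0 < ξ) => ?_)
  have hK := (sq_add_sq_le_sq_of_abs_add_abs_le (hdec ξ hξ.le)).trans_eq
    (mul_exp_neg_mul_sq C a ξ)
  have hS2 : S ξ ^ 2 ≤ C ^ 2 * exp (-(2 * a) * ξ) := by nlinarith [sq_nonneg (deriv S ξ)]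
  calc ‖ξ ^ 2 * S ξ ^ 2 * Z ξ‖ = ξ * S ξ ^ 2 * |ξ * Z ξ| := by
        rw [Real.norm_eq_abs, abs_mul, abs_mul, abs_mul, abs_of_pos hξ, abs_of_nonneg (sq_nonneg _),
          abs_of_nonneg (sq_nonneg _)]
        ring
    _ ≤ ξ * (C ^ 2 * exp (-(2 * a) * ξ)) * B := by gcongr; exact hZB ξ hξ
    _ = B * C ^ 2 * (ξ ^ 1 * exp (-(2 * a) * ξ)) := by ring

theorem abs_flux_le (hdec : ∀ ξ ≥ (0:ℝ), |S ξ| + |deriv S ξ| ≤ C * exp (-a * ξ))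
    {ξ : ℝ} (hξ : 0 ≤ ξ) :
    ‖ξ ^ 2 * deriv S ξ * S ξ‖ ≤ C ^ 2 * (ξ ^ 2 * exp (-(2 * a) * ξ)) := by
  have hK := (abs_mul_abs_le_sq_of_abs_add_abs_le (hdec ξ hξ)).trans_eq
    (mul_exp_neg_mul_sq C a ξ)
  rw [Real.norm_eq_abs, abs_mul, abs_mul, abs_of_nonneg (sq_nonneg ξ)]
  nlinarith [mul_le_mul_of_nonneg_left hK (sq_nonneg ξ)]

theorem continuousWithinAt_flux_zero
    (hdec : ∀ ξ ≥ (0:ℝ), |S ξ| + |deriv S ξ| ≤ C * exp (-a * ξ)) :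
    ContinuousWithinAt (fun ξ => ξ ^ 2 * deriv S ξ * S ξ) (Ici 0) 0 := by
  have hm : Tendsto (fun ξ : ℝ => C ^ 2 * (ξ ^ 2 * exp (-(2 * a) * ξ))) (𝓝[Ici 0] 0) (𝓝 0) := by
    have := (by fun_prop : Continuous fun ξ : ℝ => C ^ 2 * (ξ ^ 2 * exp (-(2 * a) * ξ))).tendsto 0
    simpa using this.mono_left nhdsWithin_le_nhds
  simpa [ContinuousWithinAt] using squeeze_zero_norm'
    (eventually_nhdsWithin_of_forall fun ξ (hξ : ξ ∈ Ici 0) => abs_flux_le hdec hξ) hm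

theorem tendsto_flux_atTop (ha : 0 < a)
    (hdec : ∀ ξ ≥ (0:ℝ), |S ξ| + |deriv S ξ| ≤ C * exp (-a * ξ)) :
    Tendsto (fun ξ => ξ ^ 2 * deriv S ξ * S ξ) atTop (𝓝 0) := by
  have hm := (tendsto_rpow_mul_exp_neg_mul_atTop_nhds_zero 2 (2 * a) (by positivity)).const_mul
    (C ^ 2)
  simp only [rpow_two, mul_zero] at hm
  exact squeeze_zero_norm' ((eventually_ge_atTop 0).mono fun ξ hξ => abs_flux_le hdec hξ) hm

theorem integral_interaction_eq_neg_integral_energy (hS : ContDiffOn ℝ 2 S (Ioi 0))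
    (hZ : ContinuousOn Z (Ioi 0))
    (heqS : ∀ ξ ∈ Ioi (0:ℝ), deriv (deriv S) ξ + (2 / ξ) * deriv S ξ - S ξ = S ξ * Z ξ)
    (ha : 0 < a) (hdec : ∀ ξ ≥ (0:ℝ), |S ξ| + |deriv S ξ| ≤ C * exp (-a * ξ))
    (hZB : ∀ ξ ∈ Ioi (0:ℝ), |ξ * Z ξ| ≤ B) :
    ∫ ξ in Ioi 0, ξ ^ 2 * S ξ ^ 2 * Z ξ = -∫ ξ in Ioi 0, ξ ^ 2 * (deriv S ξ ^ 2 + S ξ ^ 2) := by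
  have hS' : ContDiffOn ℝ 1 (deriv S) (Ioi 0) := hS.deriv_of_isOpen isOpen_Ioi (by norm_num)
  have hE := integrableOn_energy_density hS.continuousOn hS'.continuousOn ha hdec
  have hI := integrableOn_interaction_density hS.continuousOn hZ ha hdec hZB
  have hflux : ∀ ξ ∈ Ioi (0:ℝ), HasDerivAt (fun ξ => ξ ^ 2 * deriv S ξ * S ξ)
      (ξ ^ 2 * (deriv S ξ ^ 2 + S ξ ^ 2) + ξ ^ 2 * S ξ ^ 2 * Z ξ) ξ := fun ξ hξ => by
    have hd := hasDerivAt_sq_mul_deriv_mul hξ.ne'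
      ((hS.differentiableOn (by norm_num)).differentiableAt (isOpen_Ioi.mem_nhds hξ))
      ((hS'.differentiableOn one_ne_zero).differentiableAt (isOpen_Ioi.mem_nhds hξ))
    rw [show deriv (deriv S) ξ + 2 / ξ * deriv S ξ = S ξ * Z ξ + S ξ by
      linarith [heqS ξ hξ]] at hd
    convert hd using 1
    ring
  have hFTC := integral_Ioi_of_hasDerivAt_of_tendsto (continuousWithinAt_flux_zero hdec) hflux
    (hE.add hI) (tendsto_flux_atTop ha hdec)
  rw [integral_add hE hI] at hFTC
  simp only [zero_pow two_ne_zero, zero_mul, sub_zero] at hFTC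
  linarith

end DecayingProfile

theorem soliton_star_interaction_negative_general
    (S Z : ℝ → ℝ)
    (hS : ContDiffOn ℝ 2 S (Set.Ici 0))
    (hZ : ContDiffOn ℝ 2 Z (Set.Ici 0))
    (heqS : ∀ ξ ∈ Set.Ioi (0:ℝ),
      deriv (deriv S) ξ + (2/ξ) * deriv S ξ - S ξ = S ξ * Z ξ)
    (hSne : ∃ ξ ≥ (0:ℝ), S ξ ≠ 0)
    (hSdec : ∃ C > 0, ∃ a > 0, ∀ ξ ≥ (0:ℝ),
      |S ξ| + |deriv S ξ| ≤ C * Real.exp (-a * ξ))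
    (hZbd : ∃ B : ℝ, ∀ ξ ∈ Set.Ioi (0:ℝ),
      |ξ * Z ξ| ≤ B ∧ |ξ ^ 2 * deriv Z ξ| ≤ B) :
    (∫ ξ in Set.Ioi (0:ℝ), ξ ^ 2 * S ξ ^ 2 * Z ξ) < 0 := by
  obtain ⟨C, -, a, ha, hdec⟩ := hSdec
  obtain ⟨B, hB⟩ := hZbd
  have hSo : ContDiffOn ℝ 2 S (Ioi 0) := hS.mono Ioi_subset_Ici_self
  have hS'o : ContinuousOn (deriv S) (Ioi 0) :=
    hSo.continuousOn_deriv_of_isOpen isOpen_Ioi (by norm_num)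
  have hSc : ContinuousOn S (Ioi 0) := hSo.continuousOn
  obtain ⟨ξ₀, hξ₀, hSξ₀⟩ : ∃ ξ₀ > (0:ℝ), S ξ₀ ≠ 0 := by
    by_contra! h
    obtain ⟨ξ, hξ, hSξ⟩ := hSne
    exact hSξ (EqOn.of_subset_closure h hS.continuousOn continuousOn_const Ioi_subset_Ici_self
      (closure_Ioi (0:ℝ)).ge hξ)
  have henergy : 0 < ∫ ξ in Ioi 0, ξ ^ 2 * (deriv S ξ ^ 2 + S ξ ^ 2) :=
    setIntegral_pos_of_continuousOn_of_nonneg isOpen_Ioi (by fun_prop)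
      (integrableOn_energy_density hSc hS'o ha hdec) (fun ξ _ => by positivity) hξ₀
      (by positivity)
  rw [integral_interaction_eq_neg_integral_energy hSo (hZ.mono Ioi_subset_Ici_self).continuousOn
    heqS ha hdec fun ξ hξ => (hB ξ hξ).1]
  linarith

/-- Negativity of `∫ ξ² S² Z dξ` for a nontrivial decaying solution
(Remark after Step 4 of the proof of Theorem 2): it implies the Lagrange
multiplier `λ` is negative. -/
theorem soliton_star_interaction_negative
    (μ : ℝ) (hμ : 0 < μ) (S Z : ℝ → ℝ)
    (hS : ContDiffOn ℝ 2 S (Set.Ici 0))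
    (hZ : ContDiffOn ℝ 2 Z (Set.Ici 0))
    (heqS : ∀ ξ ∈ Set.Ioi (0:ℝ),
      deriv (deriv S) ξ + (2/ξ) * deriv S ξ - S ξ = S ξ * Z ξ)
    (heqZ : ∀ ξ ∈ Set.Ioi (0:ℝ),
      deriv (deriv Z) ξ + (2/ξ) * deriv Z ξ = μ * S ξ ^ 2)
    (hSne : ∃ ξ ≥ (0:ℝ), S ξ ≠ 0)
    (hSdec : ∃ C > 0, ∃ a > 0, ∀ ξ ≥ (0:ℝ),
      |S ξ| + |deriv S ξ| ≤ C * Real.exp (-a * ξ))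
    (hZbd : ∃ B : ℝ, ∀ ξ ∈ Set.Ioi (0:ℝ),
      |ξ * Z ξ| ≤ B ∧ |ξ ^ 2 * deriv Z ξ| ≤ B)
    (hZinf : Tendsto Z atTop (nhds 0)) :
    (∫ ξ in Set.Ioi (0:ℝ), ξ ^ 2 * S ξ ^ 2 * Z ξ) < 0 :=
  soliton_star_interaction_negative_general S Z hS hZ heqS hSne hSdec hZbd
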